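/- Let Y_1, …, Y_n be i.i.d. copies of a random vector Y ∈ ℝ^p with mean μ = EY and E‖Y‖² < ∞. Define Ω̃ = ( (1/n) Σ_{i=1}^n ((Y_i − μ)(Y_i − μ)ᵀ)^{1/2} )² and let S = cov_{d_S}(Y) = (E[((Y−μ)(Y−μ)ᵀ)^{1/2}])². Then E[d_S²(Ω̃, S)] ≤ E‖Y − μ‖² / n. -/

import Mathlib

open Matrix MeasureTheory ProbabilityTheory

noncomputable def eunorm {p : ℕ} (x : Fin p → ℝ) : ℝ := Real.sqrt (∑ i, x i ^ 2)

noncomputable def frob {p : ℕ} (M : Matrix (Fin p) (Fin p) ℝ) : ℝ :=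
  Real.sqrt (∑ i, ∑ j, M i j ^ 2)

open Classical in
noncomputable def msqrt {p : ℕ} (A : Matrix (Fin p) (Fin p) ℝ) : Matrix (Fin p) (Fin p) ℝ :=
  if h : A.PosSemidef then
    (h.1.eigenvectorUnitary.1 * diagonal ((↑) ∘ (√·) ∘ h.1.eigenvalues) *
      (star h.1.eigenvectorUnitary : Matrix (Fin p) (Fin p) ℝ)) else 0

noncomputable def dS {p : ℕ} (A B : Matrix (Fin p) (Fin p) ℝ) : ℝ := frob (msqrt A - msqrt B)

noncomputable def mExp {p : ℕ} {Ωs : Type*} [MeasurableSpace Ωs] (μ : Measure Ωs)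
    (F : Ωs → Matrix (Fin p) (Fin p) ℝ) : Matrix (Fin p) (Fin p) ℝ :=
  Matrix.of fun i j => ∫ ω, F ω i j ∂μ

noncomputable def covDS {p : ℕ} {Ωs : Type*} [MeasurableSpace Ωs] (μ : Measure Ωs)
    (Y : Ωs → Fin p → ℝ) : Matrix (Fin p) (Fin p) ℝ :=
  (mExp μ fun ω => msqrt (vecMulVec (Y ω - fun r => ∫ ω', Y ω' r ∂μ) (Y ω - fun r => ∫ ω', Y ω' r ∂μ))) *
  (mExp μ fun ω => msqrt (vecMulVec (Y ω - fun r => ∫ ω', Y ω' r ∂μ) (Y ω - fun r => ∫ ω', Y ω' r ∂μ)))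

/-! `((y - μ)(y - μ)ᵀ)^{1/2} = ‖y - μ‖⁻¹ (y - μ)(y - μ)ᵀ` is positive semidefinite, so `Ω̃` and `S`
are the squares of the positive semidefinite matrices `M` (the sample mean of these square roots)
and `A` (their expectation), whence `d_S(Ω̃, S) = ‖M - A‖_F`. Entrywise, `E (M - A)ⱼₖ²` is the
variance of a mean of `n` i.i.d. variables, at most `E Gⱼₖ² / n` for `G = ((Y - μ)(Y - μ)ᵀ)^{1/2}`,
and summing over the entries gives `E ‖G‖_F² / n = E tr((Y - μ)(Y - μ)ᵀ) / n = E ‖Y - μ‖² / n`. -/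

lemma eunorm_sq {p : ℕ} (v : Fin p → ℝ) : eunorm v ^ 2 = v ⬝ᵥ v := by
  rw [eunorm, Real.sq_sqrt (by positivity)]
  simp only [dotProduct, sq]

lemma frob_sq {p : ℕ} (M : Matrix (Fin p) (Fin p) ℝ) : frob M ^ 2 = ∑ i, ∑ j, M i j ^ 2 :=
  Real.sq_sqrt (by positivity)

lemma sq_le_frob_sq {p : ℕ} (M : Matrix (Fin p) (Fin p) ℝ) (i j : Fin p) :
    M i j ^ 2 ≤ frob M ^ 2 := by
  rw [frob_sq]
  exact (Finset.single_le_sum (f := fun j => M i j ^ 2) (fun _ _ => sq_nonneg _)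
    (Finset.mem_univ j)).trans
    (Finset.single_le_sum (f := fun i => ∑ j, M i j ^ 2) (fun _ _ => by positivity)
      (Finset.mem_univ i))

lemma frob_sq_eq_trace_mul_self {p : ℕ} {M : Matrix (Fin p) (Fin p) ℝ} (hM : M.IsHermitian) :
    frob M ^ 2 = (M * M).trace := by
  rw [frob_sq, trace]
  refine Finset.sum_congr rfl fun i _ => ?_
  rw [diag_apply, mul_apply]
  exact Finset.sum_congr rfl fun j _ => by rw [sq, ← hM.apply j i, star_trivial]

section msqrt

open scoped MatrixOrder

variable {p : ℕ}

lemma msqrt_eq_cfcSqrt {A : Matrix (Fin p) (Fin p) ℝ} (hA : A.PosSemidef) :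
    msqrt A = CFC.sqrt A := by
  rw [msqrt, dif_pos hA, CFC.sqrt_eq_cfc, cfc_nnreal_eq_real _ A, hA.1.cfc_eq]
  simp only [IsHermitian.cfc]
  congr 3
  funext i
  simp [max_eq_left (hA.eigenvalues_nonneg i)]

lemma posSemidef_msqrt (A : Matrix (Fin p) (Fin p) ℝ) : (msqrt A).PosSemidef := by
  by_cases hA : A.PosSemidef
  · rw [msqrt_eq_cfcSqrt hA]
    exact (CFC.sqrt_nonneg A).posSemidef
  · rw [msqrt, dif_neg hA]
    exact .zero

lemma msqrt_mul_self {M : Matrix (Fin p) (Fin p) ℝ} (hM : M.PosSemidef) :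
    msqrt (M * M) = M := by
  rw [msqrt_eq_cfcSqrt (pow_two M ▸ hM.pow 2)]
  exact CFC.sqrt_mul_self M hM.nonneg

lemma msqrt_mul_msqrt {A : Matrix (Fin p) (Fin p) ℝ} (hA : A.PosSemidef) :
    msqrt A * msqrt A = A := by
  rw [msqrt_eq_cfcSqrt hA]
  exact CFC.sqrt_mul_sqrt_self A hA.nonneg

lemma frob_msqrt_sq {A : Matrix (Fin p) (Fin p) ℝ} (hA : A.PosSemidef) :
    frob (msqrt A) ^ 2 = A.trace := by
  rw [frob_sq_eq_trace_mul_self (posSemidef_msqrt A).1, msqrt_mul_msqrt hA]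

lemma dS_mul_self {M N : Matrix (Fin p) (Fin p) ℝ} (hM : M.PosSemidef) (hN : N.PosSemidef) :
    dS (M * M) (N * N) = frob (M - N) := by
  rw [dS, msqrt_mul_self hM, msqrt_mul_self hN]

lemma msqrt_vecMulVec_self (v : Fin p → ℝ) :
    msqrt (vecMulVec v v) = (eunorm v)⁻¹ • vecMulVec v v := by
  rcases eq_or_ne v 0 with rfl | hv
  · rw [vecMulVec_zero, smul_zero, msqrt_eq_cfcSqrt .zero, CFC.sqrt_zero]
  · have hv' : eunorm v ≠ 0 := by
      rwa [Ne, ← sq_eq_zero_iff, eunorm_sq, dotProduct_self_eq_zero]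
    have hsq : ((eunorm v)⁻¹ • vecMulVec v v) * ((eunorm v)⁻¹ • vecMulVec v v) =
        vecMulVec v v := by
      rw [smul_mul_smul_comm, vecMulVec_mul_vecMulVec, ← eunorm_sq, vecMulVec_smul, smul_smul,
        ← sq, ← mul_pow, inv_mul_cancel₀ hv', one_pow, one_smul]
    conv_lhs => rw [← hsq]
    exact msqrt_mul_self
      ((posSemidef_vecMulVec_self_star v).smul (inv_nonneg.2 (Real.sqrt_nonneg _)))

lemma frob_msqrt_vecMulVec_self_sq (v : Fin p → ℝ) :
    frob (msqrt (vecMulVec v v)) ^ 2 = eunorm v ^ 2 := by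
  have hv : (vecMulVec v v).PosSemidef := by simpa using posSemidef_vecMulVec_self_star v
  rw [frob_msqrt_sq hv, trace_vecMulVec, eunorm_sq]

end msqrt

lemma dotProduct_mulVec_mExp {p : ℕ} {Ω : Type*} [MeasurableSpace Ω] (μ : Measure Ω)
    {F : Ω → Matrix (Fin p) (Fin p) ℝ} (hF : ∀ j k, Integrable (fun ω => F ω j k) μ)
    (x : Fin p → ℝ) : x ⬝ᵥ (mExp μ F *ᵥ x) = ∫ ω, x ⬝ᵥ (F ω *ᵥ x) ∂μ := by
  have hint : ∀ j k, Integrable (fun ω => x j * (F ω j k * x k)) μ :=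
    fun j k => ((hF j k).mul_const _).const_mul _
  simp only [dotProduct, mulVec, mExp, of_apply, Finset.mul_sum]
  rw [integral_finsetSum _ fun j _ => integrable_finsetSum _ fun k _ => hint j k]
  refine Finset.sum_congr rfl fun j _ => ?_
  rw [integral_finsetSum _ fun k _ => hint j k]
  refine Finset.sum_congr rfl fun k _ => ?_
  rw [integral_const_mul, integral_mul_const]

lemma posSemidef_mExp {p : ℕ} {Ω : Type*} [MeasurableSpace Ω] (μ : Measure Ω)
    {F : Ω → Matrix (Fin p) (Fin p) ℝ} (hF : ∀ ω, (F ω).PosSemidef)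
    (hint : ∀ j k, Integrable (fun ω => F ω j k) μ) : (mExp μ F).PosSemidef := by
  refine .of_dotProduct_mulVec_nonneg ?_ fun x => ?_
  · ext j k
    simp only [conjTranspose_apply, star_trivial, mExp, of_apply]
    exact integral_congr_ae (ae_of_all _ fun ω => (hF ω).1.apply j k)
  · rw [star_trivial, dotProduct_mulVec_mExp μ hint]
    exact integral_nonneg fun ω => by simpa using (hF ω).dotProduct_mulVec_nonneg x

section IdentDistrib

variable {Ω : Type*} [MeasurableSpace Ω] {μ : Measure Ω} {ι : Type*} [Fintype ι]
  {X : ι → Ω → ℝ} {i₀ : ι}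

lemma integral_avg_of_identDistrib (hX : Integrable (X i₀) μ)
    (hid : ∀ i, IdentDistrib (X i) (X i₀) μ μ) :
    ∫ ω, (Fintype.card ι : ℝ)⁻¹ * ∑ i, X i ω ∂μ = ∫ ω, X i₀ ω ∂μ := by
  have hcard : (Fintype.card ι : ℝ) ≠ 0 := Nat.cast_ne_zero.2 (Fintype.card_pos_iff.2 ⟨i₀⟩).ne'
  rw [integral_const_mul, integral_finsetSum _ fun i _ => (hid i).integrable_iff.2 hX,
    Finset.sum_congr rfl fun i _ => (hid i).integral_eq, Finset.sum_const, Finset.card_univ,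
    nsmul_eq_mul, inv_mul_cancel_left₀ hcard]

lemma memLp_avg_of_identDistrib (hX : MemLp (X i₀) 2 μ)
    (hid : ∀ i, IdentDistrib (X i) (X i₀) μ μ) :
    MemLp (fun ω => (Fintype.card ι : ℝ)⁻¹ * ∑ i, X i ω) 2 μ :=
  (memLp_finsetSum _ fun i _ => (hid i).memLp_iff.2 hX).const_mul _

lemma variance_avg_of_identDistrib (hX : MemLp (X i₀) 2 μ)
    (hindep : Pairwise fun i j => IndepFun (X i) (X j) μ)
    (hid : ∀ i, IdentDistrib (X i) (X i₀) μ μ) :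
    variance (fun ω => (Fintype.card ι : ℝ)⁻¹ * ∑ i, X i ω) μ =
      variance (X i₀) μ / Fintype.card ι := by
  have hcard : (Fintype.card ι : ℝ) ≠ 0 := Nat.cast_ne_zero.2 (Fintype.card_pos_iff.2 ⟨i₀⟩).ne'
  have hsum : variance (fun ω => ∑ i, X i ω) μ = Fintype.card ι * variance (X i₀) μ := by
    rw [← Finset.sum_fn, IndepFun.variance_sum (fun i _ => (hid i).memLp_iff.2 hX)
      fun i _ j _ hij => hindep hij, Finset.sum_congr rfl fun i _ => (hid i).variance_eq,
      Finset.sum_const, Finset.card_univ, nsmul_eq_mul]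
  rw [variance_const_mul, hsum]
  field_simp

lemma integral_sq_avg_sub_le [IsProbabilityMeasure μ] (hX : MemLp (X i₀) 2 μ)
    (hindep : Pairwise fun i j => IndepFun (X i) (X j) μ)
    (hid : ∀ i, IdentDistrib (X i) (X i₀) μ μ) :
    ∫ ω, ((Fintype.card ι : ℝ)⁻¹ * ∑ i, X i ω - ∫ ω', X i₀ ω' ∂μ) ^ 2 ∂μ ≤
      (∫ ω, X i₀ ω ^ 2 ∂μ) / Fintype.card ι := by
  have hvar := variance_eq_integral (memLp_avg_of_identDistrib hX hid).aemeasurable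
  rw [integral_avg_of_identDistrib (hX.integrable one_le_two) hid] at hvar
  rw [← hvar, variance_avg_of_identDistrib hX hindep hid]
  gcongr
  exact variance_le_expectation_sq hX.aestronglyMeasurable

end IdentDistrib

section RandomMatrix

variable {p : ℕ} {Ω : Type*} [MeasurableSpace Ω] {μ : Measure Ω}

lemma memLp_apply_of_integrable_frob_sq {F : Ω → Matrix (Fin p) (Fin p) ℝ} {j k : Fin p}
    (hF : AEStronglyMeasurable (fun ω => F ω j k) μ)
    (h : Integrable (fun ω => frob (F ω) ^ 2) μ) : MemLp (fun ω => F ω j k) 2 μ :=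
  (memLp_two_iff_integrable_sq hF).2 <| h.mono' (hF.pow 2) <| ae_of_all _ fun ω => by
    rw [Real.norm_of_nonneg (sq_nonneg _)]
    exact sq_le_frob_sq _ j k

theorem integral_frob_sq_avg_sub_mExp_le [IsProbabilityMeasure μ] {ι : Type*} [Fintype ι]
    {i₀ : ι} {E : Type*} [MeasurableSpace E] {Y : ι → Ω → E}
    (hindep : Pairwise fun i j => IndepFun (Y i) (Y j) μ)
    (hid : ∀ i, IdentDistrib (Y i) (Y i₀) μ μ) {g : E → Matrix (Fin p) (Fin p) ℝ}
    (hg : ∀ j k, Measurable fun y => g y j k)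
    (hg2 : Integrable (fun ω => frob (g (Y i₀ ω)) ^ 2) μ) :
    ∫ ω, frob ((Fintype.card ι : ℝ)⁻¹ • ∑ i, g (Y i ω) - mExp μ fun ω => g (Y i₀ ω)) ^ 2 ∂μ ≤
      (∫ ω, frob (g (Y i₀ ω)) ^ 2 ∂μ) / Fintype.card ι := by
  set X : Fin p → Fin p → ι → Ω → ℝ := fun j k i ω => g (Y i ω) j k
  have hX : ∀ j k, MemLp (X j k i₀) 2 μ := fun j k => memLp_apply_of_integrable_frob_sq
    ((hg j k).comp_aemeasurable (hid i₀).aemeasurable_fst).aestronglyMeasurable hg2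
  have hXid : ∀ j k i, IdentDistrib (X j k i) (X j k i₀) μ μ := fun j k i => (hid i).comp (hg j k)
  have hXindep : ∀ j k, Pairwise fun i i' => IndepFun (X j k i) (X j k i') μ :=
    fun j k _ _ h => (hindep h).comp (hg j k) (hg j k)
  have hdev : ∀ j k, Integrable (fun ω =>
      ((Fintype.card ι : ℝ)⁻¹ * ∑ i, X j k i ω - ∫ ω', X j k i₀ ω' ∂μ) ^ 2) μ := fun j k =>
    ((memLp_avg_of_identDistrib (hX j k) (hXid j k)).sub (memLp_const _)).integrable_sq
  calc _ = ∫ ω, ∑ j, ∑ k,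
          ((Fintype.card ι : ℝ)⁻¹ * ∑ i, X j k i ω - ∫ ω', X j k i₀ ω' ∂μ) ^ 2 ∂μ := by
        simp only [frob_sq, Matrix.sub_apply, Matrix.smul_apply, Matrix.sum_apply, mExp, of_apply,
          smul_eq_mul, X]
    _ = ∑ j, ∑ k, ∫ ω,
          ((Fintype.card ι : ℝ)⁻¹ * ∑ i, X j k i ω - ∫ ω', X j k i₀ ω' ∂μ) ^ 2 ∂μ := by
        rw [integral_finsetSum _ fun j _ => integrable_finsetSum _ fun k _ => hdev j k]
        exact Finset.sum_congr rfl fun j _ => integral_finsetSum _ fun k _ => hdev j k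
    _ ≤ ∑ j, ∑ k, (∫ ω, X j k i₀ ω ^ 2 ∂μ) / Fintype.card ι := by
        gcongr with j _ k _
        exact integral_sq_avg_sub_le (hX j k) (hXindep j k) (hXid j k)
    _ = _ := by
        have hsq : ∀ j k, Integrable (fun ω => X j k i₀ ω ^ 2) μ :=
          fun j k => (hX j k).integrable_sq
        simp only [← Finset.sum_div, frob_sq]
        rw [integral_finsetSum _ fun j _ => integrable_finsetSum _ fun k _ => hsq j k]
        exact congrArg (· / _) (Finset.sum_congr rfl fun j _ =>
          (integral_finsetSum _ fun k _ => hsq j k).symm)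

end RandomMatrix

@[fun_prop]
lemma measurable_eunorm {p : ℕ} : Measurable (eunorm : (Fin p → ℝ) → ℝ) := by
  unfold eunorm
  fun_prop

lemma eunorm_sub_sq_le {p : ℕ} (a b : Fin p → ℝ) :
    eunorm (a - b) ^ 2 ≤ 2 * eunorm a ^ 2 + 2 * eunorm b ^ 2 := by
  simp only [eunorm_sq, dotProduct, Finset.mul_sum, ← Finset.sum_add_distrib, Pi.sub_apply]
  exact Finset.sum_le_sum fun i _ => by nlinarith [sq_nonneg (a i + b i)]

lemma integrable_eunorm_sub_sq {p : ℕ} {Ω : Type*} [MeasurableSpace Ω] {μ : Measure Ω}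
    [IsFiniteMeasure μ] {Z : Ω → Fin p → ℝ} (hZ : AEMeasurable Z μ)
    (h : Integrable (fun ω => eunorm (Z ω) ^ 2) μ) (c : Fin p → ℝ) :
    Integrable (fun ω => eunorm (Z ω - c) ^ 2) μ :=
  ((h.const_mul 2).add (integrable_const (2 * eunorm c ^ 2))).mono'
    ((measurable_eunorm.comp_aemeasurable (hZ.sub_const c)).pow_const 2).aestronglyMeasurable
    (ae_of_all _ fun ω => by
      rw [Real.norm_of_nonneg (sq_nonneg _)]
      exact eunorm_sub_sq_le _ _)

theorem stmt8_general {p : ℕ} {Ωs : Type*} [MeasurableSpace Ωs] (μ : Measure Ωs)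
    [IsProbabilityMeasure μ] {n : ℕ} (hn : 0 < n) (Y : Fin n → Ωs → Fin p → ℝ)
    (hindep : iIndepFun Y μ)
    (hid : ∀ i j, IdentDistrib (Y i) (Y j) μ μ)
    (hL2 : Integrable (fun ω => eunorm (Y ⟨0, hn⟩ ω) ^ 2) μ)
    (μv : Fin p → ℝ) (hμv : μv = fun r => ∫ ω, Y ⟨0, hn⟩ ω r ∂μ)
    (S : Matrix (Fin p) (Fin p) ℝ) (hS : S = covDS μ (Y ⟨0, hn⟩)) :
    (∫ ω, dS
        (((n : ℝ)⁻¹ • ∑ i, msqrt (vecMulVec (Y i ω - μv) (Y i ω - μv))) *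
         ((n : ℝ)⁻¹ • ∑ i, msqrt (vecMulVec (Y i ω - μv) (Y i ω - μv)))) S ^ 2 ∂μ) ≤
      (∫ ω, eunorm (Y ⟨0, hn⟩ ω - μv) ^ 2 ∂μ) / n := by
  set i₀ : Fin n := ⟨0, hn⟩
  set g : (Fin p → ℝ) → Matrix (Fin p) (Fin p) ℝ := fun v => msqrt (vecMulVec (v - μv) (v - μv))
  have hg : ∀ j k, Measurable fun v => g v j k := fun j k => by
    simp only [g, msqrt_vecMulVec_self, Matrix.smul_apply, vecMulVec_apply, smul_eq_mul]
    fun_prop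
  have hg2 : Integrable (fun ω => frob (g (Y i₀ ω)) ^ 2) μ := by
    simp only [g, frob_msqrt_vecMulVec_self_sq]
    exact integrable_eunorm_sub_sq (hid i₀ i₀).aemeasurable_fst hL2 μv
  have hA : (mExp μ fun ω => g (Y i₀ ω)).PosSemidef :=
    posSemidef_mExp μ (fun _ => posSemidef_msqrt _) fun j k =>
      (memLp_apply_of_integrable_frob_sq ((hg j k).comp_aemeasurable
        (hid i₀ i₀).aemeasurable_fst).aestronglyMeasurable hg2).integrable one_le_two
  have hS' : S = mExp μ (fun ω => g (Y i₀ ω)) * mExp μ (fun ω => g (Y i₀ ω)) := by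
    rw [hS, covDS, ← hμv]
  calc _ = ∫ ω, frob ((n : ℝ)⁻¹ • ∑ i, g (Y i ω) - mExp μ fun ω => g (Y i₀ ω)) ^ 2 ∂μ := by
        refine integral_congr_ae (ae_of_all _ fun ω => ?_)
        dsimp only
        rw [hS', dS_mul_self ((posSemidef_sum _ fun i _ => posSemidef_msqrt _).smul
          (by positivity)) hA]
    _ ≤ (∫ ω, frob (g (Y i₀ ω)) ^ 2 ∂μ) / n := by
        simpa using integral_frob_sq_avg_sub_mExp_le (fun _ _ => hindep.indepFun)
          (fun i => hid i i₀) hg hg2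
    _ = _ := by simp only [g, frob_msqrt_vecMulVec_self_sq]

/-- For i.i.d. copies `Y₁, …, Yₙ` of a random vector `Y ∈ ℝ^p` with mean `μ` and
`E‖Y‖² < ∞`, with `Ω̃ = ((1/n) Σᵢ ((Yᵢ−μ)(Yᵢ−μ)ᵀ)^{1/2})²` and `S = cov_{d_S}(Y)`, one has
`E[d_S²(Ω̃, S)] ≤ E‖Y − μ‖² / n`. -/
theorem stmt8 {p : ℕ} {Ωs : Type*} [MeasurableSpace Ωs] (μ : Measure Ωs)
    [IsProbabilityMeasure μ] {n : ℕ} (hn : 0 < n) (Y : Fin n → Ωs → Fin p → ℝ)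
    (hmeas : ∀ i, Measurable (Y i))
    (hindep : iIndepFun Y μ)
    (hid : ∀ i j, IdentDistrib (Y i) (Y j) μ μ)
    (hL2 : Integrable (fun ω => eunorm (Y ⟨0, hn⟩ ω) ^ 2) μ)
    (μv : Fin p → ℝ) (hμv : μv = fun r => ∫ ω, Y ⟨0, hn⟩ ω r ∂μ)
    (S : Matrix (Fin p) (Fin p) ℝ) (hS : S = covDS μ (Y ⟨0, hn⟩)) :
    (∫ ω, dS
        (((n : ℝ)⁻¹ • ∑ i, msqrt (vecMulVec (Y i ω - μv) (Y i ω - μv))) *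
         ((n : ℝ)⁻¹ • ∑ i, msqrt (vecMulVec (Y i ω - μv) (Y i ω - μv)))) S ^ 2 ∂μ) ≤
      (∫ ω, eunorm (Y ⟨0, hn⟩ ω - μv) ^ 2 ∂μ) / n :=
  stmt8_general μ hn Y hindep hid hL2 μv hμv S hS
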